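/- arXiv:2008.08675 — 2 statements merged into one kernel-verified Lean document; each statement's English description precedes it below -/
import Mathlib

section
/- Let f be a deep linear CNN of depth d with n channels and Flatten readout. Then for every input x, f(x) = (k_w k_h)^{-d/2} Σ_{(a_1,b_1),…,(a_d,b_d)} f_{(a_1,b_1),…,(a_d,b_d)}(x), where the sum runs over all d-tuples of filter offsets with 1 ≤ a_ℓ ≤ k_w, 1 ≤ b_ℓ ≤ k_h, and f_{(a_1,b_1),…,(a_d,b_d)}(x) = (W H n)^{-1/2} (n^{d-1} c)^{-1/2} Σ_{r,s} v_{r,s}^T W^{(d)}_{a_d,b_d} ⋯ W^{(2)}_{a_2,b_2} W^{(1)}_{a_1,b_1} x_{r+a_1+⋯+a_d, s+b_1+⋯+b_d} (spatial indices modulo W and H). In particular, each summand is a deep linear fully-connected-type map in the filter slice matrices W^{(ℓ)}_{a,b}, which are mutually independent Gaussian matrices, it uses exactly one slice per layer, and distinct summands may share slices. -/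
open MeasureTheory ProbabilityTheory
open Fin.NatCast

namespace DeepLinearCNN

/-- Convolutional parameters of a depth-`d` linear CNN with `n` channels on inputs with `c`
channels: the first-layer filter `W^(1)_{a,b} : n×c` and the higher-layer filters
`W^(2), …, W^(d)`, each `n×n`. -/
abbrev ConvParam (kw kh c n d : ℕ) : Type :=
  (Fin kw × Fin kh × Fin n × Fin c) ⊕ (Fin (d - 1) × Fin kw × Fin kh × Fin n × Fin n)

/-- Full parameter index type: readout parameters of type `R` together with the
convolutional filters. -/
abbrev Param (R : Type) (kw kh c n d : ℕ) : Type := R ⊕ ConvParam kw kh c n d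

/-- The activations of the deep linear CNN: `acts … θ x ℓ` is `α^{(ℓ+1)}`, with
`α^{(ℓ+1)}_{r,s} = (kw kh n_ℓ)^{-1/2} Σ_{a,b} W^{(ℓ+1)}_{a,b} α^{(ℓ)}_{r+a,s+b}` and
`α^{(0)} = x`; spatial indices are taken modulo `Wd`, `Ht` (periodic padding). -/
noncomputable def acts (Wd Ht kw kh c n d : ℕ) [NeZero Wd] [NeZero Ht] {R : Type}
    (θ : Param R kw kh c n d → ℝ) (x : Fin Wd → Fin Ht → Fin c → ℝ) :
    ℕ → Fin Wd → Fin Ht → Fin n → ℝ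
  | 0 => fun r s i =>
      (Real.sqrt ((kw : ℝ) * (kh : ℝ) * (c : ℝ)))⁻¹ *
        ∑ a : Fin kw, ∑ b : Fin kh, ∑ j : Fin c,
          θ (.inr (.inl (a, b, i, j))) *
            x (r + (((a : ℕ) + 1 : ℕ) : Fin Wd)) (s + (((b : ℕ) + 1 : ℕ) : Fin Ht)) j
  | ℓ + 1 => fun r s i =>
      (Real.sqrt ((kw : ℝ) * (kh : ℝ) * (n : ℝ)))⁻¹ *
        ∑ a : Fin kw, ∑ b : Fin kh, ∑ j : Fin n,
          (if h : ℓ < d - 1 then θ (.inr (.inr (⟨ℓ, h⟩, a, b, i, j))) else 0) *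
            acts Wd Ht kw kh c n d θ x ℓ
              (r + (((a : ℕ) + 1 : ℕ) : Fin Wd)) (s + (((b : ℕ) + 1 : ℕ) : Fin Ht)) j

/-- The depth-`d` deep linear CNN with Flatten readout,
`f(x) = (Wd Ht n)^{-1/2} Σ_{r,s} v_{r,s} ⬝ α^{(d)}_{r,s}`. -/
noncomputable def netFlatten (Wd Ht kw kh c n d : ℕ) [NeZero Wd] [NeZero Ht]
    (θ : Param (Fin Wd × Fin Ht × Fin n) kw kh c n d → ℝ)
    (x : Fin Wd → Fin Ht → Fin c → ℝ) : ℝ :=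
  (Real.sqrt ((Wd : ℝ) * (Ht : ℝ) * (n : ℝ)))⁻¹ *
    ∑ r : Fin Wd, ∑ s : Fin Ht, ∑ i : Fin n,
      θ (.inl (r, s, i)) * acts Wd Ht kw kh c n d θ x (d - 1) r s i

/-- The depth-`d` deep linear CNN with global average pooling readout,
`f(x) = (Wd Ht)^{-1} n^{-1/2} Σ_{r,s} v ⬝ α^{(d)}_{r,s}`. -/
noncomputable def netGAP (Wd Ht kw kh c n d : ℕ) [NeZero Wd] [NeZero Ht]
    (θ : Param (Fin n) kw kh c n d → ℝ)
    (x : Fin Wd → Fin Ht → Fin c → ℝ) : ℝ :=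
  ((Wd : ℝ) * (Ht : ℝ))⁻¹ * (Real.sqrt (n : ℝ))⁻¹ *
    ∑ r : Fin Wd, ∑ s : Fin Ht, ∑ i : Fin n,
      θ (.inl i) * acts Wd Ht kw kh c n d θ x (d - 1) r s i

/-- The matrix chain `W^(d)_{A d} ⋯ W^(2)_{A 2} W^(1)_{A 1}` of filter slices determined by
the offsets `A`, applied to the channel vector `xvec`: `chain … t` is the result after
`t + 1` matrices. -/
noncomputable def chain (Wd Ht kw kh c n d : ℕ) (hd : 0 < d)
    (A : Fin d → Fin kw × Fin kh)
    (θ : Param (Fin Wd × Fin Ht × Fin n) kw kh c n d → ℝ) (xvec : Fin c → ℝ) :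
    ℕ → Fin n → ℝ
  | 0 => fun i =>
      ∑ j : Fin c, θ (.inr (.inl ((A ⟨0, hd⟩).1, (A ⟨0, hd⟩).2, i, j))) * xvec j
  | t + 1 => fun i => ∑ j : Fin n,
      (if h : t < d - 1 then
        θ (.inr (.inr (⟨t, h⟩, (A ⟨t + 1, by omega⟩).1, (A ⟨t + 1, by omega⟩).2, i, j)))
      else 0) * chain Wd Ht kw kh c n d hd A θ xvec t j

/-- The fully-connected-type summand
`f_{(a₁,b₁),…,(a_d,b_d)}(x) = (Wd Ht n)^{-1/2} (n^{d-1} c)^{-1/2}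
  Σ_{r,s} v_{r,s}ᵀ W^(d)_{a_d,b_d} ⋯ W^(1)_{a_1,b_1} x_{r+a₁+⋯+a_d, s+b₁+⋯+b_d}`
determined by the choice of one filter offset `A ℓ` per layer. -/
noncomputable def summand (Wd Ht kw kh c n d : ℕ) [NeZero Wd] [NeZero Ht] (hd : 0 < d)
    (A : Fin d → Fin kw × Fin kh)
    (θ : Param (Fin Wd × Fin Ht × Fin n) kw kh c n d → ℝ)
    (x : Fin Wd → Fin Ht → Fin c → ℝ) : ℝ :=
  (Real.sqrt ((Wd : ℝ) * (Ht : ℝ) * (n : ℝ)))⁻¹ *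
    (Real.sqrt ((n : ℝ) ^ (d - 1) * (c : ℝ)))⁻¹ *
    ∑ r : Fin Wd, ∑ s : Fin Ht, ∑ i : Fin n,
      θ (.inl (r, s, i)) *
        chain Wd Ht kw kh c n d hd A θ
          (fun j => x (r + ∑ ℓ : Fin d, ((((A ℓ).1 : ℕ) + 1 : ℕ) : Fin Wd))
                      (s + ∑ ℓ : Fin d, ((((A ℓ).2 : ℕ) + 1 : ℕ) : Fin Ht)) j)
          (d - 1) i

/-! Unrolling the recursion for the activations, each layer contributes a sum over its `kw * kh`
filter offsets; distributing, `α^{(ℓ+1)}` is a sum over offset paths `(B 0, …, B ℓ)` of the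
matrix products `W_{B ℓ} ⋯ W_{B 0}` applied to the input shifted by the accumulated offsets.
The per-layer factors `(kw kh n_ℓ)^{-1/2}` then regroup as `(kw kh)^{-d/2} (n^{d-1} c)^{-1/2}`. -/

open Matrix

theorem _root_.Real.sqrt_pow {x : ℝ} (hx : 0 ≤ x) : ∀ m : ℕ, √(x ^ m) = √x ^ m
  | 0 => by simp
  | m + 1 => by rw [pow_succ, pow_succ, Real.sqrt_mul (pow_nonneg hx m), Real.sqrt_pow hx m]

theorem _root_.Fin.sum_comp_snoc {α M : Type*} [AddCommMonoid M] {k : ℕ} (f : α → M)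
    (B : Fin k → α) (p : α) :
    ∑ t, f (Fin.snoc (α := fun _ => α) B p t) = ∑ t, f (B t) + f p := by
  simp [Fin.sum_univ_castSucc]

theorem inv_sqrt_pow_mul_inv_sqrt {x y : ℝ} (hx : 0 ≤ x) (hy : 0 ≤ y) (z : ℝ) (m : ℕ) :
    (√(x * y))⁻¹ ^ m * (√(x * z))⁻¹ = (√(x ^ (m + 1)))⁻¹ * (√(y ^ m * z))⁻¹ := by
  rw [inv_pow, ← mul_inv, ← mul_inv, ← Real.sqrt_pow (mul_nonneg hx hy),
    ← Real.sqrt_mul (pow_nonneg (mul_nonneg hx hy) m), ← Real.sqrt_mul (pow_nonneg hx _)]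
  ring_nf

section Slices

variable {R : Type} {kw kh c n d : ℕ}

def inputSlice (θ : Param R kw kh c n d → ℝ) (p : Fin kw × Fin kh) : Matrix (Fin n) (Fin c) ℝ :=
  fun i j => θ (.inr (.inl (p.1, p.2, i, j)))

/-- The filter slice `W^(ℓ+2)_{a,b}`, taken to be zero for `ℓ ≥ d - 1`. -/
def hiddenSlice (θ : Param R kw kh c n d → ℝ) (ℓ : ℕ) (p : Fin kw × Fin kh) :
    Matrix (Fin n) (Fin n) ℝ :=
  fun i j => if h : ℓ < d - 1 then θ (.inr (.inr (⟨ℓ, h⟩, p.1, p.2, i, j))) else 0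

/-- `sliceChain θ v ℓ B = W^(ℓ+1)_{B ℓ} ⋯ W^(1)_{B 0} v`. -/
def sliceChain (θ : Param R kw kh c n d → ℝ) (v : Fin c → ℝ) :
    (ℓ : ℕ) → (Fin (ℓ + 1) → Fin kw × Fin kh) → Fin n → ℝ
  | 0, B => inputSlice θ (B 0) *ᵥ v
  | ℓ + 1, B => hiddenSlice θ ℓ (B (Fin.last _)) *ᵥ sliceChain θ v ℓ (Fin.init B)

end Slices

theorem chain_eq_sliceChain {Wd Ht kw kh c n d : ℕ} (hd : 0 < d) (A : Fin d → Fin kw × Fin kh)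
    (θ : Param (Fin Wd × Fin Ht × Fin n) kw kh c n d → ℝ) (v : Fin c → ℝ) :
    ∀ t (ht : t < d), chain Wd Ht kw kh c n d hd A θ v t
      = sliceChain θ v t (fun k => A ⟨k, by omega⟩)
  | 0, _ => rfl
  | t + 1, ht => by
      funext i
      rw [chain, chain_eq_sliceChain hd A θ v t (by omega)]
      rfl

theorem acts_eq_sum_sliceChain {Wd Ht kw kh c n d : ℕ} [NeZero Wd] [NeZero Ht] {R : Type}
    (θ : Param R kw kh c n d → ℝ) (x : Fin Wd → Fin Ht → Fin c → ℝ) :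
    ∀ ℓ r s, acts Wd Ht kw kh c n d θ x ℓ r s
      = ((√((kw : ℝ) * kh * n))⁻¹ ^ ℓ * (√((kw : ℝ) * kh * c))⁻¹) •
        ∑ B : Fin (ℓ + 1) → Fin kw × Fin kh, sliceChain θ
          (x (r + ∑ t, ((((B t).1 : ℕ) + 1 : ℕ) : Fin Wd))
             (s + ∑ t, ((((B t).2 : ℕ) + 1 : ℕ) : Fin Ht))) ℓ B
  | 0, r, s => by
      funext i
      rw [← (Equiv.funUnique (Fin 1) _).symm.sum_comp, Fintype.sum_prod_type]
      simp [acts, sliceChain, inputSlice, Matrix.mulVec, dotProduct, Finset.sum_apply]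
  | ℓ + 1, r, s => by
      funext i
      have init_snocEquiv : ∀ (p : Fin kw × Fin kh) (B : Fin (ℓ + 1) → Fin kw × Fin kh),
          Fin.init ((Fin.snocEquiv fun _ => Fin kw × Fin kh) (p, B)) = B :=
        fun p B => Fin.init_snoc (α := fun _ => Fin kw × Fin kh) p B
      rw [← (Fin.snocEquiv _).sum_comp, Fintype.sum_prod_type, Fintype.sum_prod_type]
      simp only [acts, acts_eq_sum_sliceChain θ x ℓ, Fin.snocEquiv_apply, sliceChain,
        init_snocEquiv, Fin.snoc_last, Pi.smul_apply,
        Fin.sum_comp_snoc (fun q : Fin kw × Fin kh => (((q.1 : ℕ) + 1 : ℕ) : Fin Wd)),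
        Fin.sum_comp_snoc (fun q : Fin kw × Fin kh => (((q.2 : ℕ) + 1 : ℕ) : Fin Ht)),
        Finset.sum_apply, smul_eq_mul, mulVec, dotProduct, hiddenSlice, Finset.mul_sum]
      refine Finset.sum_congr rfl fun a _ =>
        Finset.sum_congr rfl fun b _ => Finset.sum_comm.trans ?_
      refine Finset.sum_congr rfl fun B _ => Finset.sum_congr rfl fun j _ => ?_
      rw [add_comm (∑ _, _) (((a : ℕ) + 1 : ℕ) : Fin Wd),
        add_comm (∑ _, _) (((b : ℕ) + 1 : ℕ) : Fin Ht), ← add_assoc, ← add_assoc]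
      ring

theorem deep_linear_cnn_decomposition_general (Wd Ht kw kh c n d : ℕ)
    [NeZero Wd] [NeZero Ht]
    (hd : 0 < d)
    (θ : Param (Fin Wd × Fin Ht × Fin n) kw kh c n d → ℝ)
    (x : Fin Wd → Fin Ht → Fin c → ℝ) :
    netFlatten Wd Ht kw kh c n d θ x
      = (Real.sqrt (((kw : ℝ) * (kh : ℝ)) ^ d))⁻¹ *
        ∑ A : Fin d → Fin kw × Fin kh, summand Wd Ht kw kh c n d hd A θ x := by
  obtain ⟨m, rfl⟩ : ∃ m, d = m + 1 := ⟨d - 1, by omega⟩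
  have hchain (A : Fin (m + 1) → Fin kw × Fin kh) (v : Fin c → ℝ) :
      chain Wd Ht kw kh c n (m + 1) hd A θ v m = sliceChain θ v m A :=
    chain_eq_sliceChain hd A θ v m (by omega)
  have hscale :=
    inv_sqrt_pow_mul_inv_sqrt (x := (kw : ℝ) * kh) (by positivity) (Nat.cast_nonneg n) c m
  unfold netFlatten summand
  simp only [Nat.add_sub_cancel, acts_eq_sum_sliceChain, hchain, hscale, Pi.smul_apply,
    Finset.sum_apply, smul_eq_mul, ← Fintype.sum_prod_type']
  simp only [Finset.mul_sum]
  rw [Finset.sum_comm]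
  refine Finset.sum_congr rfl fun A _ => Finset.sum_congr rfl fun p _ => ?_
  ring

/-- a deep linear CNN of depth `d` with `n` channels and Flatten readout
decomposes as `f(x) = (kw kh)^{-d/2} Σ_{(a₁,b₁),…,(a_d,b_d)} f_{(a₁,b₁),…,(a_d,b_d)}(x)`,
the sum running over all `d`-tuples of filter offsets, where each summand is the deep
linear fully-connected-type map using one filter slice per layer. -/
theorem deep_linear_cnn_decomposition (Wd Ht kw kh c n d : ℕ)
    [NeZero Wd] [NeZero Ht] (hkw : 0 < kw) (hkh : 0 < kh) (hc : 0 < c)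
    (hd : 0 < d) (hn : 1 ≤ n)
    (θ : Param (Fin Wd × Fin Ht × Fin n) kw kh c n d → ℝ)
    (x : Fin Wd → Fin Ht → Fin c → ℝ) :
    netFlatten Wd Ht kw kh c n d θ x
      = (Real.sqrt (((kw : ℝ) * (kh : ℝ)) ^ d))⁻¹ *
        ∑ A : Fin d → Fin kw × Fin kh, summand Wd Ht kw kh c n d hd A θ x :=
  deep_linear_cnn_decomposition_general Wd Ht kw kh c n d hd θ x

end DeepLinearCNN
end

section
/- Let f be a one-hidden-layer network of width n with smooth activation σ such that σ, σ' are polynomially bounded, and let Θ be its neural tangent kernel. Then for all inputs x, x' ∈ ℝ^{d_0} and all n ≥ 1, E_θ[Θ(x,x')] = E_{w∼N(0,I_{d_0})}[ σ(d_0^{-1/2} w·x) σ(d_0^{-1/2} w·x') ] + (⟨x,x'⟩/d_0) · E_{w∼N(0,I_{d_0})}[ σ'(d_0^{-1/2} w·x) σ'(d_0^{-1/2} w·x') ], independent of n. -/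
open MeasureTheory ProbabilityTheory
open scoped ENNReal NNReal

namespace OneHiddenLayer

/-- Parameter index type for a one-hidden-layer network of width `n` on inputs in `ℝ^{d0}`:
the input weight vectors `w_i` (`Fin n × Fin d0`) and the readout weights `v_i` (`Fin n`). -/
abbrev Param (d0 n : ℕ) : Type := (Fin n × Fin d0) ⊕ Fin n

/-- The one-hidden-layer network `f(x) = n^{-1/2} Σ_i v_i σ(d0^{-1/2} w_i ⬝ x)`. -/
noncomputable def net (σ : ℝ → ℝ) (d0 n : ℕ) (θ : Param d0 n → ℝ) (x : Fin d0 → ℝ) : ℝ :=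
  (Real.sqrt (n : ℝ))⁻¹ * ∑ i : Fin n, θ (.inr i) *
    σ ((Real.sqrt (d0 : ℝ))⁻¹ * ∑ j : Fin d0, θ (.inl (i, j)) * x j)

/-- All parameters are i.i.d. standard Gaussians. -/
noncomputable def gaussParam (d0 n : ℕ) : Measure (Param d0 n → ℝ) :=
  Measure.pi fun _ => gaussianReal 0 1

/-- A single standard Gaussian vector `w ∼ N(0, I_{d0})`. -/
noncomputable def gaussVec (d0 : ℕ) : Measure (Fin d0 → ℝ) :=
  Measure.pi fun _ => gaussianReal 0 1

/-- The neural tangent kernel `Θ(x,x') = Σ_μ ∂f(x)/∂θ_μ ⬝ ∂f(x')/∂θ_μ`. -/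
noncomputable def NTK (σ : ℝ → ℝ) (d0 n : ℕ) (θ : Param d0 n → ℝ) (x x' : Fin d0 → ℝ) : ℝ :=
  ∑ μ : Param d0 n,
    fderiv ℝ (fun θ' => net σ d0 n θ' x) θ (Pi.single μ 1) *
    fderiv ℝ (fun θ' => net σ d0 n θ' x') θ (Pi.single μ 1)


theorem measurePreserving_comp_inj {ι κ : Type*} [Fintype ι] [Fintype κ]
    (e : ι → κ) (he : Function.Injective e)
    (μ : κ → Measure ℝ) [∀ k, IsProbabilityMeasure (μ k)] :
    MeasurePreserving (fun θ : κ → ℝ => fun i => θ (e i))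
      (Measure.pi μ) (Measure.pi fun i => μ (e i)) := by
  classical
  have hmeas : Measurable (fun θ : κ → ℝ => fun i => θ (e i)) :=
    measurable_pi_iff.2 fun i => measurable_pi_apply _
  refine ⟨hmeas, ?_⟩
  refine (Measure.pi_eq fun s hs => ?_).symm
  rw [Measure.map_apply hmeas (MeasurableSet.univ_pi hs)]
  have hpre : (fun θ : κ → ℝ => fun i => θ (e i)) ⁻¹' Set.pi Set.univ s
      = Set.pi Set.univ (Function.extend e s fun _ => Set.univ) := by
    ext θ
    simp only [Set.mem_preimage, Set.mem_pi, Set.mem_univ, true_implies]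
    constructor
    · intro h k
      by_cases hk : ∃ i, e i = k
      · obtain ⟨i, rfl⟩ := hk
        rw [he.extend_apply]; exact h i
      · rw [Function.extend_apply' _ _ _ hk]; trivial
    · intro h i
      have := h (e i)
      rwa [he.extend_apply] at this
  rw [hpre, Measure.pi_pi]
  have hstep : ∏ k, μ k (Function.extend e s (fun _ => Set.univ) k)
      = ∏ k ∈ Finset.univ.image e, μ k (Function.extend e s (fun _ => Set.univ) k) := by
    refine (Finset.prod_subset (Finset.subset_univ _) fun k _ hk => ?_).symm
    have hk' : ¬∃ i, e i = k := by simpa using hk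
    rw [Function.extend_apply' _ _ _ hk']
    exact measure_univ
  rw [hstep, Finset.prod_image (fun i _ j _ h => he h)]
  exact Finset.prod_congr rfl fun i _ => by rw [he.extend_apply]


lemma integral_gaussianReal_std (g : ℝ → ℝ) :
    ∫ t, g t ∂(gaussianReal 0 1) = ∫ t, gaussianPDFReal 0 1 t * g t := by
  rw [gaussianReal_of_var_ne_zero 0 one_ne_zero]
  have : (gaussianPDF 0 1) = fun x => ((Real.toNNReal (gaussianPDFReal 0 1 x) : ℝ≥0) : ℝ≥0∞) :=
    rfl
  rw [this, integral_withDensity_eq_integral_smul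
    ((measurable_gaussianPDFReal 0 1).real_toNNReal)]
  refine integral_congr_ae (Filter.Eventually.of_forall fun x => ?_)
  show (gaussianPDFReal 0 1 x).toNNReal • g x = gaussianPDFReal 0 1 x * g x
  rw [NNReal.smul_def, Real.coe_toNNReal _ (gaussianPDFReal_nonneg 0 1 x), smul_eq_mul]

lemma integrable_gaussianReal_iff (g : ℝ → ℝ) :
    Integrable g (gaussianReal 0 1) ↔
      Integrable (fun x => g x * gaussianPDFReal 0 1 x) := by
  rw [gaussianReal_of_var_ne_zero 0 one_ne_zero,
    integrable_withDensity_iff (measurable_gaussianPDF 0 1)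
      (Filter.Eventually.of_forall fun x => ENNReal.ofReal_lt_top)]
  refine integrable_congr (Filter.Eventually.of_forall fun x => ?_)
  simp [gaussianPDF, ENNReal.toReal_ofReal (gaussianPDFReal_nonneg 0 1 x)]

lemma continuous_gaussianPDFReal_std : Continuous (gaussianPDFReal 0 1) := by
  unfold gaussianPDFReal
  fun_prop

lemma integrable_poly_gaussian (r : ℕ) :
    Integrable (fun t : ℝ => (1 + |t|) ^ r) (gaussianReal 0 1) := by
  rw [integrable_gaussianReal_iff]
  refine Integrable.mono'
    ((integrable_exp_neg_mul_sq (show (0:ℝ) < 1/4 by norm_num)).const_mul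
      ((2:ℝ)^r * Real.exp ((r:ℝ)^2) * (Real.sqrt (2 * Real.pi))⁻¹)) ?_ ?_
  · exact (((continuous_const.add continuous_abs).pow r).mul
        continuous_gaussianPDFReal_std).aestronglyMeasurable
  · refine Filter.Eventually.of_forall fun x => ?_
    have hpdf : gaussianPDFReal 0 1 x
        = (Real.sqrt (2 * Real.pi))⁻¹ * Real.exp (-(1/2) * x^2) := by
      unfold gaussianPDFReal
      push_cast
      ring_nf
    have h0 : (0:ℝ) ≤ (1 + |x|) ^ r := by positivity
    have h1 : (1 + |x|) ^ r ≤ (2:ℝ)^r * Real.exp ((r:ℝ) * |x|) := by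
      calc (1 + |x|) ^ r ≤ (2 * Real.exp |x|) ^ r := by
            apply pow_le_pow_left₀ (by positivity)
            nlinarith [Real.add_one_le_exp |x|, Real.exp_pos |x|]
        _ = (2:ℝ)^r * Real.exp ((r:ℝ) * |x|) := by
            rw [mul_pow, ← Real.exp_nat_mul]
    have h2 : Real.exp ((r:ℝ) * |x|) * Real.exp (-(1/2) * x^2)
        ≤ Real.exp ((r:ℝ)^2) * Real.exp (-(1/4) * x^2) := by
      rw [← Real.exp_add, ← Real.exp_add]
      apply Real.exp_le_exp.2
      nlinarith [sq_nonneg ((r:ℝ) - |x|/2), sq_abs x]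
    have hnorm : ‖(1 + |x|) ^ r * gaussianPDFReal 0 1 x‖
        = (1 + |x|) ^ r * gaussianPDFReal 0 1 x := by
      rw [Real.norm_eq_abs, abs_of_nonneg (mul_nonneg h0 (gaussianPDFReal_nonneg 0 1 x))]
    rw [hnorm, hpdf]
    have hs : (0:ℝ) < (Real.sqrt (2 * Real.pi))⁻¹ := by
      rw [inv_pos]
      exact Real.sqrt_pos.2 (by positivity)
    calc (1 + |x|) ^ r * ((Real.sqrt (2 * Real.pi))⁻¹ * Real.exp (-(1/2) * x^2))
        ≤ ((2:ℝ)^r * Real.exp ((r:ℝ) * |x|)) * ((Real.sqrt (2 * Real.pi))⁻¹ * Real.exp (-(1/2) * x^2)) := by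
          apply mul_le_mul_of_nonneg_right h1 (by positivity)
      _ = (2:ℝ)^r * (Real.sqrt (2 * Real.pi))⁻¹ * (Real.exp ((r:ℝ) * |x|) * Real.exp (-(1/2) * x^2)) := by ring
      _ ≤ (2:ℝ)^r * (Real.sqrt (2 * Real.pi))⁻¹ * (Real.exp ((r:ℝ)^2) * Real.exp (-(1/4) * x^2)) := by
          apply mul_le_mul_of_nonneg_left h2 (by positivity)
      _ = (2:ℝ)^r * Real.exp ((r:ℝ)^2) * (Real.sqrt (2 * Real.pi))⁻¹ * Real.exp (-(1/4) * x^2) := by ring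

lemma integral_sq_exp : ∫ x : ℝ, x^2 * Real.exp (-(1/2) * x^2) = Real.sqrt (2 * Real.pi) := by
  have h1 : ∫ x : ℝ, x^2 * Real.exp (-(1/2) * x^2)
      = 2 * ∫ x in Set.Ioi (0:ℝ), x^2 * Real.exp (-(1/2) * x^2) := by
    calc ∫ x : ℝ, x^2 * Real.exp (-(1/2) * x^2)
        = ∫ x : ℝ, (fun t : ℝ => t^2 * Real.exp (-(1/2) * t^2)) |x| := by
          simp only [sq_abs]
      _ = 2 * ∫ x in Set.Ioi (0:ℝ), x^2 * Real.exp (-(1/2) * x^2) := integral_comp_abs (f := fun t : ℝ => t^2 * Real.exp (-(1/2) * t^2))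
  have h2 := integral_rpow_mul_exp_neg_mul_rpow (p := 2) (q := 2) (b := 1/2)
    two_pos (by norm_num) (by norm_num)
  have hconv : ∀ x : ℝ, x ^ (2:ℝ) = x ^ (2:ℕ) := fun x => by
    rw [show (2:ℝ) = ((2:ℕ):ℝ) by norm_num, Real.rpow_natCast]
  simp only [hconv] at h2
  rw [h1, h2]
  have hG : Real.Gamma (((2:ℝ)+1)/2) = Real.sqrt Real.pi / 2 := by
    rw [show ((2:ℝ)+1)/2 = 1/2 + 1 by norm_num, Real.Gamma_add_one (by norm_num),
      Real.Gamma_one_half_eq]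
    ring
  have hb : ((1:ℝ)/2) ^ (-((2:ℝ)+1)/2) = Real.sqrt 2 * 2 := by
    rw [show (1:ℝ)/2 = 2⁻¹ by norm_num, show -((2:ℝ)+1)/2 = -(3/2) by norm_num,
      Real.rpow_neg (by norm_num), Real.inv_rpow (by norm_num), inv_inv,
      show (3:ℝ)/2 = 1/2 + 1 by norm_num, Real.rpow_add (by norm_num), Real.rpow_one,
      ← Real.sqrt_eq_rpow]
  rw [hG, hb, Real.sqrt_mul (by norm_num : (0:ℝ) ≤ 2)]
  ring

lemma integral_sq_gaussianReal : ∫ t, t^2 ∂(gaussianReal 0 1) = 1 := by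
  rw [integral_gaussianReal_std]
  have hpt : ∀ t : ℝ, gaussianPDFReal 0 1 t * t^2
      = (Real.sqrt (2 * Real.pi))⁻¹ * (t^2 * Real.exp (-(1/2) * t^2)) := by
    intro t
    have : gaussianPDFReal 0 1 t
        = (Real.sqrt (2 * Real.pi))⁻¹ * Real.exp (-(1/2) * t^2) := by
      unfold gaussianPDFReal
      push_cast
      ring_nf
    rw [this]; ring
  simp only [hpt]
  rw [integral_const_mul, integral_sq_exp]
  exact inv_mul_cancel₀ (ne_of_gt (Real.sqrt_pos.2 (by positivity)))



instance {d0 : ℕ} : IsProbabilityMeasure (gaussVec d0) := by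
  unfold gaussVec; infer_instance

instance {d0 n : ℕ} : IsProbabilityMeasure (gaussParam d0 n) := by
  unfold gaussParam; infer_instance

lemma integrable_sq_gaussianReal : Integrable (fun t : ℝ => t ^ 2) (gaussianReal 0 1) := by
  refine (integrable_poly_gaussian 2).mono' ((continuous_pow 2).aestronglyMeasurable)
    (Filter.Eventually.of_forall fun t => ?_)
  rw [Real.norm_eq_abs, abs_pow]
  exact pow_le_pow_left₀ (abs_nonneg t) (by linarith [abs_nonneg t]) 2

noncomputable def Lx (d0 n : ℕ) (x : Fin d0 → ℝ) (i : Fin n) : (Param d0 n → ℝ) →L[ℝ] ℝ :=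
  ∑ j : Fin d0, ((Real.sqrt (d0:ℝ))⁻¹ * x j) •
    (ContinuousLinearMap.proj (R := ℝ) (φ := fun _ : Param d0 n => ℝ) (Sum.inl (i, j)))

lemma Lx_apply (d0 n : ℕ) (x : Fin d0 → ℝ) (i : Fin n) (θ : Param d0 n → ℝ) :
    Lx d0 n x i θ = (Real.sqrt (d0:ℝ))⁻¹ * ∑ j : Fin d0, θ (Sum.inl (i, j)) * x j := by
  simp only [Lx, ContinuousLinearMap.coe_sum', Finset.sum_apply,
    ContinuousLinearMap.coe_smul', Pi.smul_apply, ContinuousLinearMap.proj_apply,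
    smul_eq_mul, Finset.mul_sum]
  exact Finset.sum_congr rfl fun j _ => by ring

noncomputable def Dnet (σ : ℝ → ℝ) (d0 n : ℕ) (x : Fin d0 → ℝ) (θ : Param d0 n → ℝ) :
    (Param d0 n → ℝ) →L[ℝ] ℝ :=
  (Real.sqrt (n:ℝ))⁻¹ • ∑ i : Fin n,
    (θ (Sum.inr i) • (deriv σ (Lx d0 n x i θ) • Lx d0 n x i)
      + σ (Lx d0 n x i θ) •
        (ContinuousLinearMap.proj (R := ℝ) (φ := fun _ : Param d0 n => ℝ) (Sum.inr i)))

lemma hasFDerivAt_net (σ : ℝ → ℝ) (hσ : ContDiff ℝ (⊤ : ℕ∞) σ) (d0 n : ℕ) (x : Fin d0 → ℝ)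
    (θ : Param d0 n → ℝ) :
    HasFDerivAt (fun θ' => net σ d0 n θ' x) (Dnet σ d0 n x θ) θ := by
  have hrw : (fun θ' : Param d0 n → ℝ => net σ d0 n θ' x)
      = fun θ' => (Real.sqrt (n:ℝ))⁻¹ * ∑ i : Fin n, θ' (Sum.inr i) * σ (Lx d0 n x i θ') := by
    funext θ'
    simp only [net, Lx_apply]
  rw [hrw]
  exact HasFDerivAt.const_mul
    (HasFDerivAt.fun_sum fun i _ =>
      (ContinuousLinearMap.proj (R := ℝ) (φ := fun _ : Param d0 n => ℝ)
        (Sum.inr i)).hasFDerivAt.mul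
        ((((hσ.differentiable (by simp)) (Lx d0 n x i θ)).hasDerivAt).comp_hasFDerivAt θ
          (Lx d0 n x i).hasFDerivAt)) _

lemma fderiv_net_inr (σ : ℝ → ℝ) (hσ : ContDiff ℝ (⊤ : ℕ∞) σ) (d0 n : ℕ) (x : Fin d0 → ℝ)
    (θ : Param d0 n → ℝ) (i' : Fin n) :
    fderiv ℝ (fun θ' => net σ d0 n θ' x) θ (Pi.single (Sum.inr i') 1)
      = (Real.sqrt (n:ℝ))⁻¹ * σ (Lx d0 n x i' θ) := by
  rw [(hasFDerivAt_net σ hσ d0 n x θ).fderiv]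
  simp only [Dnet, ContinuousLinearMap.coe_smul', Pi.smul_apply,
    ContinuousLinearMap.coe_sum', Finset.sum_apply, ContinuousLinearMap.add_apply,
    ContinuousLinearMap.smul_apply,
    ContinuousLinearMap.proj_apply, smul_eq_mul]
  have hL : ∀ i : Fin n, Lx d0 n x i (Pi.single (Sum.inr i') 1) = 0 := by
    intro i
    simp [Lx, Pi.single_apply]
  simp only [hL, Pi.single_apply, mul_zero, zero_add]
  simp [Finset.sum_ite_eq', Sum.inr.injEq]

lemma fderiv_net_inl (σ : ℝ → ℝ) (hσ : ContDiff ℝ (⊤ : ℕ∞) σ) (d0 n : ℕ) (x : Fin d0 → ℝ)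
    (θ : Param d0 n → ℝ) (i' : Fin n) (j' : Fin d0) :
    fderiv ℝ (fun θ' => net σ d0 n θ' x) θ (Pi.single (Sum.inl (i', j')) 1)
      = (Real.sqrt (n:ℝ))⁻¹ *
          (θ (Sum.inr i') * (deriv σ (Lx d0 n x i' θ) * ((Real.sqrt (d0:ℝ))⁻¹ * x j'))) := by
  rw [(hasFDerivAt_net σ hσ d0 n x θ).fderiv]
  simp only [Dnet, ContinuousLinearMap.coe_smul', Pi.smul_apply,
    ContinuousLinearMap.coe_sum', Finset.sum_apply, ContinuousLinearMap.add_apply,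
    ContinuousLinearMap.smul_apply, ContinuousLinearMap.proj_apply, smul_eq_mul]
  have hL : ∀ i : Fin n, Lx d0 n x i (Pi.single (Sum.inl (i', j')) 1)
      = if i = i' then (Real.sqrt (d0:ℝ))⁻¹ * x j' else 0 := by
    intro i
    simp only [Lx, ContinuousLinearMap.coe_sum', Finset.sum_apply,
      ContinuousLinearMap.coe_smul', Pi.smul_apply, ContinuousLinearMap.proj_apply,
      smul_eq_mul, Pi.single_apply]
    by_cases h : i = i'
    · subst h
      simp [Prod.ext_iff, Finset.sum_ite_eq', mul_comm]
    · have : ∀ j : Fin d0, (Sum.inl (i, j) : Param d0 n) = Sum.inl (i', j') ↔ False := by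
        intro j
        simp [Prod.ext_iff, h]
      simp [this, h]
  simp only [hL, Pi.single_apply]
  have hinr : ∀ i : Fin n, ((Sum.inr i : Param d0 n) = Sum.inl (i', j') ↔ False) := by
    intro i; simp
  simp [hinr, Finset.sum_ite_eq', mul_ite]


lemma NTK_eq (σ : ℝ → ℝ) (hσ : ContDiff ℝ (⊤ : ℕ∞) σ) (d0 n : ℕ) (x x' : Fin d0 → ℝ)
    (θ : Param d0 n → ℝ) :
    NTK σ d0 n θ x x' =
      (∑ i : Fin n, ((n:ℝ))⁻¹ * (((d0:ℝ))⁻¹ * ((∑ j : Fin d0, x j * x' j) *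
          (θ (Sum.inr i)^2 * (deriv σ (Lx d0 n x i θ) * deriv σ (Lx d0 n x' i θ))))))
        + ∑ i : Fin n, ((n:ℝ))⁻¹ * (σ (Lx d0 n x i θ) * σ (Lx d0 n x' i θ)) := by
  have ha : ((n:ℝ))⁻¹ = (Real.sqrt (n:ℝ))⁻¹ * (Real.sqrt (n:ℝ))⁻¹ := by
    rw [← mul_inv, Real.mul_self_sqrt (Nat.cast_nonneg n)]
  have hc : ((d0:ℝ))⁻¹ = (Real.sqrt (d0:ℝ))⁻¹ * (Real.sqrt (d0:ℝ))⁻¹ := by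
    rw [← mul_inv, Real.mul_self_sqrt (Nat.cast_nonneg d0)]
  rw [NTK, Fintype.sum_sum_type]
  congr 1
  · rw [Fintype.sum_prod_type]
    refine Finset.sum_congr rfl fun i _ => ?_
    simp only [fderiv_net_inl σ hσ]
    calc ∑ j : Fin d0, ((Real.sqrt (n:ℝ))⁻¹ *
            (θ (Sum.inr i) * (deriv σ (Lx d0 n x i θ) * ((Real.sqrt (d0:ℝ))⁻¹ * x j)))) *
            ((Real.sqrt (n:ℝ))⁻¹ *
            (θ (Sum.inr i) * (deriv σ (Lx d0 n x' i θ) * ((Real.sqrt (d0:ℝ))⁻¹ * x' j))))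
        = ∑ j : Fin d0, (x j * x' j) *
            (((Real.sqrt (n:ℝ))⁻¹ * (Real.sqrt (n:ℝ))⁻¹) *
              (((Real.sqrt (d0:ℝ))⁻¹ * (Real.sqrt (d0:ℝ))⁻¹) *
                (θ (Sum.inr i)^2 * (deriv σ (Lx d0 n x i θ) * deriv σ (Lx d0 n x' i θ))))) :=
          Finset.sum_congr rfl fun j _ => by ring
      _ = (∑ j : Fin d0, x j * x' j) *
            (((Real.sqrt (n:ℝ))⁻¹ * (Real.sqrt (n:ℝ))⁻¹) *
              (((Real.sqrt (d0:ℝ))⁻¹ * (Real.sqrt (d0:ℝ))⁻¹) *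
                (θ (Sum.inr i)^2 * (deriv σ (Lx d0 n x i θ) * deriv σ (Lx d0 n x' i θ))))) := by
          rw [← Finset.sum_mul]
      _ = ((n:ℝ))⁻¹ * (((d0:ℝ))⁻¹ * ((∑ j : Fin d0, x j * x' j) *
            (θ (Sum.inr i)^2 * (deriv σ (Lx d0 n x i θ) * deriv σ (Lx d0 n x' i θ))))) := by
          rw [← ha, ← hc]; ring
  · refine Finset.sum_congr rfl fun i _ => ?_
    rw [fderiv_net_inr σ hσ, fderiv_net_inr σ hσ, ha]
    ring


variable {d0 n : ℕ}

lemma measurePreserving_projW (i : Fin n) :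
    MeasurePreserving (fun θ : Param d0 n → ℝ => fun j : Fin d0 => θ (Sum.inl (i, j)))
      (gaussParam d0 n) (gaussVec d0) := by
  have he : Function.Injective (fun j : Fin d0 => (Sum.inl (i, j) : Param d0 n)) := by
    intro a b h
    simpa using h
  exact measurePreserving_comp_inj _ he (fun _ => gaussianReal 0 1)

lemma measurePreserving_joint (i : Fin n) :
    MeasurePreserving (fun θ : Param d0 n → ℝ =>
        ((fun j : Fin d0 => θ (Sum.inl (i, j)), θ (Sum.inr i)) : (Fin d0 → ℝ) × ℝ))
      (gaussParam d0 n) ((gaussVec d0).prod (gaussianReal 0 1)) := by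
  classical
  let e : Fin d0 ⊕ Unit → Param d0 n :=
    fun o => o.elim (fun j => Sum.inl (i, j)) (fun _ => Sum.inr i)
  have he : Function.Injective e := by
    intro a b h
    cases a <;> cases b <;> simp_all [e]
  have h1 := measurePreserving_comp_inj e he (fun _ => gaussianReal 0 1)
  have h2 := measurePreserving_sumPiEquivProdPi (X := fun _ : Fin d0 ⊕ Unit => ℝ)
      (μ := fun _ => gaussianReal 0 1)
  have h3 : MeasurePreserving
      (Prod.map (id : (Fin d0 → ℝ) → (Fin d0 → ℝ)) (MeasurableEquiv.funUnique Unit ℝ))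
      ((Measure.pi fun _ : Fin d0 => gaussianReal 0 1).prod
        (Measure.pi fun _ : Unit => gaussianReal 0 1))
      ((gaussVec d0).prod (gaussianReal 0 1)) :=
    (MeasurePreserving.id _).prod (measurePreserving_funUnique (gaussianReal 0 1) Unit)
  exact (h3.comp h2).comp h1

lemma one_le_prod_fac' (w : Fin d0 → ℝ) (s : Finset (Fin d0)) :
    (1:ℝ) ≤ ∏ j ∈ s, (1 + |w j|) := by
  have := Finset.prod_le_prod (f := fun _ : Fin d0 => (1:ℝ))
    (g := fun j : Fin d0 => 1 + |w j|) (s := s)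
    (fun j _ => zero_le_one) (fun j _ => show (1:ℝ) ≤ 1 + |w j| by linarith [abs_nonneg (w j)])
  simpa using this

lemma one_le_prod_fac (w : Fin d0 → ℝ) : (1:ℝ) ≤ ∏ j : Fin d0, (1 + |w j|) :=
  one_le_prod_fac' w Finset.univ

lemma poly_bound (c : ℝ) (x : Fin d0 → ℝ) (r : ℕ) (w : Fin d0 → ℝ) :
    (1 + |c * ∑ j : Fin d0, w j * x j|) ^ r
      ≤ (1 + ∑ j : Fin d0, |c * x j|) ^ r * ∏ j : Fin d0, (1 + |w j|) ^ r := by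
  have hfac : ∀ k : Fin d0, (1:ℝ) ≤ 1 + |w k| := fun k => by simp [abs_nonneg]
  have hprod1 := one_le_prod_fac w
  have hwj : ∀ j : Fin d0, |w j| ≤ ∏ k : Fin d0, (1 + |w k|) := by
    intro j
    calc |w j| ≤ 1 + |w j| := by linarith [abs_nonneg (w j)]
      _ = (1 + |w j|) * 1 := (mul_one _).symm
      _ ≤ (1 + |w j|) * ∏ k ∈ Finset.univ.erase j, (1 + |w k|) :=
          mul_le_mul_of_nonneg_left (one_le_prod_fac' w _) (by linarith [abs_nonneg (w j)])
      _ = ∏ k : Fin d0, (1 + |w k|) :=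
          Finset.mul_prod_erase Finset.univ (fun k : Fin d0 => 1 + |w k|) (Finset.mem_univ j)
  have hsum : |c * ∑ j : Fin d0, w j * x j|
      ≤ (∑ j : Fin d0, |c * x j|) * ∏ k : Fin d0, (1 + |w k|) := by
    calc |c * ∑ j : Fin d0, w j * x j| = |∑ j : Fin d0, c * (w j * x j)| := by
          rw [Finset.mul_sum]
      _ ≤ ∑ j : Fin d0, |c * (w j * x j)| := Finset.abs_sum_le_sum_abs _ _
      _ ≤ ∑ j : Fin d0, |c * x j| * ∏ k : Fin d0, (1 + |w k|) := by
          refine Finset.sum_le_sum fun j _ => ?_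
          have habs : |c * (w j * x j)| = |c * x j| * |w j| := by
            rw [abs_mul, abs_mul, abs_mul]; ring
          rw [habs]
          exact mul_le_mul_of_nonneg_left (hwj j) (abs_nonneg _)
      _ = (∑ j : Fin d0, |c * x j|) * ∏ k : Fin d0, (1 + |w k|) := (Finset.sum_mul _ _ _).symm
  have key : 1 + |c * ∑ j : Fin d0, w j * x j|
      ≤ (1 + ∑ j : Fin d0, |c * x j|) * ∏ k : Fin d0, (1 + |w k|) := by
    have h0 : (0:ℝ) ≤ ∑ j : Fin d0, |c * x j| := Finset.sum_nonneg fun j _ => abs_nonneg _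
    nlinarith [hprod1, hsum]
  calc (1 + |c * ∑ j : Fin d0, w j * x j|) ^ r
      ≤ ((1 + ∑ j : Fin d0, |c * x j|) * ∏ k : Fin d0, (1 + |w k|)) ^ r :=
        pow_le_pow_left₀ (by positivity) key r
    _ = (1 + ∑ j : Fin d0, |c * x j|) ^ r * ∏ j : Fin d0, (1 + |w j|) ^ r := by
        rw [mul_pow, Finset.prod_pow]

lemma integrable_prod_poly (r : ℕ) :
    Integrable (fun w : Fin d0 → ℝ => ∏ j : Fin d0, (1 + |w j|) ^ r) (gaussVec d0) := by
  letI : MeasureSpace ℝ := ⟨gaussianReal 0 1⟩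
  haveI : SigmaFinite (volume : Measure ℝ) := by
    show SigmaFinite (gaussianReal 0 1); infer_instance
  exact Integrable.fintype_prod (𝕜 := ℝ) (f := fun _ : Fin d0 => fun t : ℝ => (1 + |t|)^r)
    (fun _ => integrable_poly_gaussian r)

lemma integrable_comp_mul (f₁ f₂ : ℝ → ℝ) (h₁c : Continuous f₁) (h₂c : Continuous f₂)
    {C₁ C₂ : ℝ} {r₁ r₂ : ℕ} (hb₁ : ∀ t, |f₁ t| ≤ C₁ * (1+|t|)^r₁)
    (hb₂ : ∀ t, |f₂ t| ≤ C₂ * (1+|t|)^r₂) (c : ℝ) (x x' : Fin d0 → ℝ) :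
    Integrable (fun w : Fin d0 → ℝ =>
      f₁ (c * ∑ j : Fin d0, w j * x j) * f₂ (c * ∑ j : Fin d0, w j * x' j)) (gaussVec d0) := by
  have hC₁ : 0 ≤ C₁ := le_trans (abs_nonneg (f₁ 0)) (by simpa using hb₁ 0)
  have hC₂ : 0 ≤ C₂ := le_trans (abs_nonneg (f₂ 0)) (by simpa using hb₂ 0)
  have hlin : Continuous fun w : Fin d0 → ℝ => c * ∑ j : Fin d0, w j * x j := by fun_prop
  have hlin' : Continuous fun w : Fin d0 → ℝ => c * ∑ j : Fin d0, w j * x' j := by fun_prop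
  refine Integrable.mono'
    ((integrable_prod_poly (r₁ + r₂)).const_mul
      (C₁ * (1 + ∑ j : Fin d0, |c * x j|)^r₁ * (C₂ * (1 + ∑ j : Fin d0, |c * x' j|)^r₂)))
    (((h₁c.comp hlin).mul (h₂c.comp hlin')).aestronglyMeasurable)
    (Filter.Eventually.of_forall fun w => ?_)
  rw [Real.norm_eq_abs, abs_mul]
  calc |f₁ (c * ∑ j : Fin d0, w j * x j)| * |f₂ (c * ∑ j : Fin d0, w j * x' j)|
      ≤ (C₁ * (1 + |c * ∑ j : Fin d0, w j * x j|)^r₁)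
          * (C₂ * (1 + |c * ∑ j : Fin d0, w j * x' j|)^r₂) := by
        apply mul_le_mul (hb₁ _) (hb₂ _) (abs_nonneg _) (by positivity)
    _ ≤ (C₁ * ((1 + ∑ j : Fin d0, |c * x j|)^r₁ * ∏ j : Fin d0, (1 + |w j|)^r₁))
          * (C₂ * ((1 + ∑ j : Fin d0, |c * x' j|)^r₂ * ∏ j : Fin d0, (1 + |w j|)^r₂)) := by
        apply mul_le_mul
        · exact mul_le_mul_of_nonneg_left (poly_bound c x r₁ w) hC₁
        · exact mul_le_mul_of_nonneg_left (poly_bound c x' r₂ w) hC₂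
        · positivity
        · positivity
    _ = (C₁ * (1 + ∑ j : Fin d0, |c * x j|)^r₁ * (C₂ * (1 + ∑ j : Fin d0, |c * x' j|)^r₂))
          * ∏ j : Fin d0, (1 + |w j|)^(r₁ + r₂) := by
        have : ∏ j : Fin d0, (1 + |w j|)^(r₁ + r₂)
            = (∏ j : Fin d0, (1 + |w j|)^r₁) * ∏ j : Fin d0, (1 + |w j|)^r₂ := by
          rw [← Finset.prod_mul_distrib]
          exact Finset.prod_congr rfl fun j _ => pow_add _ _ _
        rw [this]; ring



lemma integral_comp_projW {d0 n : ℕ} (i : Fin n) (G : (Fin d0 → ℝ) → ℝ)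
    (hG : AEStronglyMeasurable G (gaussVec d0)) :
    ∫ θ, G (fun j => θ (Sum.inl (i, j))) ∂(gaussParam d0 n) = ∫ w, G w ∂(gaussVec d0) := by
  have hmp := measurePreserving_projW (d0 := d0) (n := n) i
  have h := integral_map (φ := fun θ : Param d0 n → ℝ => fun j : Fin d0 => θ (Sum.inl (i, j)))
      hmp.measurable.aemeasurable (f := G) (by rw [hmp.map_eq]; exact hG)
  rw [hmp.map_eq] at h
  exact h.symm

lemma integrable_comp_projW {d0 n : ℕ} (i : Fin n) (G : (Fin d0 → ℝ) → ℝ)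
    (hG : Integrable G (gaussVec d0)) :
    Integrable (fun θ : Param d0 n → ℝ => G (fun j => θ (Sum.inl (i, j))))
      (gaussParam d0 n) :=
  ((measurePreserving_projW i).integrable_comp hG.aestronglyMeasurable).2 hG

lemma integral_comp_joint {d0 n : ℕ} (i : Fin n) (F : (Fin d0 → ℝ) × ℝ → ℝ)
    (hF : AEStronglyMeasurable F ((gaussVec d0).prod (gaussianReal 0 1))) :
    ∫ θ, F (fun j => θ (Sum.inl (i, j)), θ (Sum.inr i)) ∂(gaussParam d0 n)
      = ∫ p, F p ∂((gaussVec d0).prod (gaussianReal 0 1)) := by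
  have hmp := measurePreserving_joint (d0 := d0) (n := n) i
  have h := integral_map (φ := fun θ : Param d0 n → ℝ =>
      ((fun j : Fin d0 => θ (Sum.inl (i, j)), θ (Sum.inr i)) : (Fin d0 → ℝ) × ℝ))
      hmp.measurable.aemeasurable (f := F) (by rw [hmp.map_eq]; exact hF)
  rw [hmp.map_eq] at h
  exact h.symm

lemma integrable_comp_joint {d0 n : ℕ} (i : Fin n) (F : (Fin d0 → ℝ) × ℝ → ℝ)
    (hF : Integrable F ((gaussVec d0).prod (gaussianReal 0 1))) :
    Integrable (fun θ : Param d0 n → ℝ =>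
      F (fun j => θ (Sum.inl (i, j)), θ (Sum.inr i))) (gaussParam d0 n) :=
  ((measurePreserving_joint i).integrable_comp hF.aestronglyMeasurable).2 hF

/-- for a one-hidden-layer network of width `n` with smooth activation `σ`
such that `σ`, `σ'` are polynomially bounded,
`E_θ[Θ(x,x')] = E_w[σ σ] + (⟨x,x'⟩/d0) E_w[σ' σ']`, independent of `n`. -/
theorem one_hidden_layer_ntk_mean (σ : ℝ → ℝ) (hσs : ContDiff ℝ (⊤ : ℕ∞) σ)
    (hσp : ∃ C : ℝ, ∃ r : ℕ, ∀ t : ℝ, |σ t| ≤ C * (1 + |t|) ^ r)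
    (hσp' : ∃ C : ℝ, ∃ r : ℕ, ∀ t : ℝ, |deriv σ t| ≤ C * (1 + |t|) ^ r)
    (d0 : ℕ) (hd0 : 0 < d0) (x x' : Fin d0 → ℝ) (n : ℕ) (hn : 1 ≤ n) :
    ∫ θ, NTK σ d0 n θ x x' ∂(gaussParam d0 n)
      = (∫ w, σ ((Real.sqrt (d0 : ℝ))⁻¹ * ∑ j : Fin d0, w j * x j) *
            σ ((Real.sqrt (d0 : ℝ))⁻¹ * ∑ j : Fin d0, w j * x' j) ∂(gaussVec d0))
        + ((∑ j : Fin d0, x j * x' j) / (d0 : ℝ)) *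
          ∫ w, deriv σ ((Real.sqrt (d0 : ℝ))⁻¹ * ∑ j : Fin d0, w j * x j) *
            deriv σ ((Real.sqrt (d0 : ℝ))⁻¹ * ∑ j : Fin d0, w j * x' j) ∂(gaussVec d0) := by
  classical
  obtain ⟨C₁, r₁, hb₁⟩ := hσp
  obtain ⟨C₂, r₂, hb₂⟩ := hσp'
  have hσc : Continuous σ := hσs.continuous
  have hdc : Continuous (deriv σ) := hσs.continuous_deriv (by simp)
  have hn0 : (n : ℝ) ≠ 0 := Nat.cast_ne_zero.2 (by omega)
  have hlin : Continuous fun w : Fin d0 → ℝ =>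
      (Real.sqrt (d0 : ℝ))⁻¹ * ∑ j : Fin d0, w j * x j := by fun_prop
  have hlin' : Continuous fun w : Fin d0 → ℝ =>
      (Real.sqrt (d0 : ℝ))⁻¹ * ∑ j : Fin d0, w j * x' j := by fun_prop
  have hGσc : Continuous fun w : Fin d0 → ℝ =>
      σ ((Real.sqrt (d0 : ℝ))⁻¹ * ∑ j : Fin d0, w j * x j) *
        σ ((Real.sqrt (d0 : ℝ))⁻¹ * ∑ j : Fin d0, w j * x' j) :=
    (hσc.comp hlin).mul (hσc.comp hlin')
  have hGdc : Continuous fun w : Fin d0 → ℝ =>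
      deriv σ ((Real.sqrt (d0 : ℝ))⁻¹ * ∑ j : Fin d0, w j * x j) *
        deriv σ ((Real.sqrt (d0 : ℝ))⁻¹ * ∑ j : Fin d0, w j * x' j) :=
    (hdc.comp hlin).mul (hdc.comp hlin')
  have hGσ_int : Integrable (fun w : Fin d0 → ℝ =>
      σ ((Real.sqrt (d0 : ℝ))⁻¹ * ∑ j : Fin d0, w j * x j) *
        σ ((Real.sqrt (d0 : ℝ))⁻¹ * ∑ j : Fin d0, w j * x' j)) (gaussVec d0) :=
    integrable_comp_mul σ σ hσc hσc hb₁ hb₁ _ x x'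
  have hGd_int : Integrable (fun w : Fin d0 → ℝ =>
      deriv σ ((Real.sqrt (d0 : ℝ))⁻¹ * ∑ j : Fin d0, w j * x j) *
        deriv σ ((Real.sqrt (d0 : ℝ))⁻¹ * ∑ j : Fin d0, w j * x' j)) (gaussVec d0) :=
    integrable_comp_mul (deriv σ) (deriv σ) hdc hdc hb₂ hb₂ _ x x'
  -- the two-variable function for the joint pushforward
  have hFc : Continuous fun p : (Fin d0 → ℝ) × ℝ =>
      (deriv σ ((Real.sqrt (d0 : ℝ))⁻¹ * ∑ j : Fin d0, p.1 j * x j) *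
        deriv σ ((Real.sqrt (d0 : ℝ))⁻¹ * ∑ j : Fin d0, p.1 j * x' j)) * p.2 ^ 2 :=
    (hGdc.comp continuous_fst).mul (continuous_snd.pow 2)
  have hF_int : Integrable (fun p : (Fin d0 → ℝ) × ℝ =>
      (deriv σ ((Real.sqrt (d0 : ℝ))⁻¹ * ∑ j : Fin d0, p.1 j * x j) *
        deriv σ ((Real.sqrt (d0 : ℝ))⁻¹ * ∑ j : Fin d0, p.1 j * x' j)) * p.2 ^ 2)
      ((gaussVec d0).prod (gaussianReal 0 1)) :=
    hGd_int.mul_prod integrable_sq_gaussianReal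
  -- the per-neuron summand functions
  set IGσ := ∫ w, σ ((Real.sqrt (d0 : ℝ))⁻¹ * ∑ j : Fin d0, w j * x j) *
      σ ((Real.sqrt (d0 : ℝ))⁻¹ * ∑ j : Fin d0, w j * x' j) ∂(gaussVec d0) with hIGσ
  set IGd := ∫ w, deriv σ ((Real.sqrt (d0 : ℝ))⁻¹ * ∑ j : Fin d0, w j * x j) *
      deriv σ ((Real.sqrt (d0 : ℝ))⁻¹ * ∑ j : Fin d0, w j * x' j) ∂(gaussVec d0) with hIGd
  -- rewriting of each summand as a composition with the coordinate projections
  have heqB : ∀ i : Fin n, (fun θ : Param d0 n → ℝ =>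
      ((n:ℝ))⁻¹ * (σ (Lx d0 n x i θ) * σ (Lx d0 n x' i θ)))
      = fun θ : Param d0 n → ℝ => ((n:ℝ))⁻¹ *
        ((fun w : Fin d0 → ℝ =>
          σ ((Real.sqrt (d0 : ℝ))⁻¹ * ∑ j : Fin d0, w j * x j) *
            σ ((Real.sqrt (d0 : ℝ))⁻¹ * ∑ j : Fin d0, w j * x' j))
          (fun j => θ (Sum.inl (i, j)))) := by
    intro i
    funext θ
    simp only [Lx_apply]
  have heqA : ∀ i : Fin n, (fun θ : Param d0 n → ℝ =>
      ((n:ℝ))⁻¹ * (((d0:ℝ))⁻¹ * ((∑ j : Fin d0, x j * x' j) *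
        (θ (Sum.inr i)^2 * (deriv σ (Lx d0 n x i θ) * deriv σ (Lx d0 n x' i θ))))))
      = fun θ : Param d0 n → ℝ => (((n:ℝ))⁻¹ * (((d0:ℝ))⁻¹ * ∑ j : Fin d0, x j * x' j)) *
        ((fun p : (Fin d0 → ℝ) × ℝ =>
          (deriv σ ((Real.sqrt (d0 : ℝ))⁻¹ * ∑ j : Fin d0, p.1 j * x j) *
            deriv σ ((Real.sqrt (d0 : ℝ))⁻¹ * ∑ j : Fin d0, p.1 j * x' j)) * p.2 ^ 2)
          (fun j => θ (Sum.inl (i, j)), θ (Sum.inr i))) := by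
    intro i
    funext θ
    simp only [Lx_apply]
    ring
  -- integrability of each summand
  have hBint : ∀ i : Fin n, Integrable (fun θ : Param d0 n → ℝ =>
      ((n:ℝ))⁻¹ * (σ (Lx d0 n x i θ) * σ (Lx d0 n x' i θ))) (gaussParam d0 n) := by
    intro i
    rw [heqB i]
    exact (integrable_comp_projW i _ hGσ_int).const_mul _
  have hAint : ∀ i : Fin n, Integrable (fun θ : Param d0 n → ℝ =>
      ((n:ℝ))⁻¹ * (((d0:ℝ))⁻¹ * ((∑ j : Fin d0, x j * x' j) *
        (θ (Sum.inr i)^2 * (deriv σ (Lx d0 n x i θ) * deriv σ (Lx d0 n x' i θ))))))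
      (gaussParam d0 n) := by
    intro i
    rw [heqA i]
    exact (integrable_comp_joint i _ hF_int).const_mul _
  -- the integrals of each summand
  have hBval : ∀ i : Fin n, ∫ θ, ((n:ℝ))⁻¹ * (σ (Lx d0 n x i θ) * σ (Lx d0 n x' i θ))
      ∂(gaussParam d0 n) = ((n:ℝ))⁻¹ * IGσ := by
    intro i
    rw [show (fun θ : Param d0 n → ℝ => ((n:ℝ))⁻¹ * (σ (Lx d0 n x i θ) * σ (Lx d0 n x' i θ)))
      = _ from heqB i, integral_const_mul,
      integral_comp_projW i _ hGσc.aestronglyMeasurable, hIGσ]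
  have hAval : ∀ i : Fin n, ∫ θ, ((n:ℝ))⁻¹ * (((d0:ℝ))⁻¹ * ((∑ j : Fin d0, x j * x' j) *
      (θ (Sum.inr i)^2 * (deriv σ (Lx d0 n x i θ) * deriv σ (Lx d0 n x' i θ)))))
      ∂(gaussParam d0 n)
      = (((n:ℝ))⁻¹ * (((d0:ℝ))⁻¹ * ∑ j : Fin d0, x j * x' j)) * IGd := by
    intro i
    rw [show (fun θ : Param d0 n → ℝ =>
        ((n:ℝ))⁻¹ * (((d0:ℝ))⁻¹ * ((∑ j : Fin d0, x j * x' j) *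
          (θ (Sum.inr i)^2 * (deriv σ (Lx d0 n x i θ) * deriv σ (Lx d0 n x' i θ))))))
      = _ from heqA i, integral_const_mul,
      integral_comp_joint i _ hFc.aestronglyMeasurable]
    rw [integral_prod_mul (L := ℝ)
      (f := fun w : Fin d0 → ℝ =>
        deriv σ ((Real.sqrt (d0 : ℝ))⁻¹ * ∑ j : Fin d0, w j * x j) *
          deriv σ ((Real.sqrt (d0 : ℝ))⁻¹ * ∑ j : Fin d0, w j * x' j))
      (g := fun v : ℝ => v ^ 2)]
    rw [integral_sq_gaussianReal, mul_one, hIGd]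
  -- put everything together
  calc ∫ θ, NTK σ d0 n θ x x' ∂(gaussParam d0 n)
      = ∫ θ, ((∑ i : Fin n, ((n:ℝ))⁻¹ * (((d0:ℝ))⁻¹ * ((∑ j : Fin d0, x j * x' j) *
            (θ (Sum.inr i)^2 * (deriv σ (Lx d0 n x i θ) * deriv σ (Lx d0 n x' i θ))))))
          + ∑ i : Fin n, ((n:ℝ))⁻¹ * (σ (Lx d0 n x i θ) * σ (Lx d0 n x' i θ)))
          ∂(gaussParam d0 n) :=
        integral_congr_ae (Filter.Eventually.of_forall fun θ => NTK_eq σ hσs d0 n x x' θ)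
    _ = (∫ θ, (∑ i : Fin n, ((n:ℝ))⁻¹ * (((d0:ℝ))⁻¹ * ((∑ j : Fin d0, x j * x' j) *
            (θ (Sum.inr i)^2 * (deriv σ (Lx d0 n x i θ) * deriv σ (Lx d0 n x' i θ))))))
          ∂(gaussParam d0 n))
        + ∫ θ, (∑ i : Fin n, ((n:ℝ))⁻¹ * (σ (Lx d0 n x i θ) * σ (Lx d0 n x' i θ)))
          ∂(gaussParam d0 n) :=
        integral_add (integrable_finset_sum _ fun i _ => hAint i)
          (integrable_finset_sum _ fun i _ => hBint i)
    _ = (∑ i : Fin n, (((n:ℝ))⁻¹ * (((d0:ℝ))⁻¹ * ∑ j : Fin d0, x j * x' j)) * IGd)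
        + ∑ i : Fin n, ((n:ℝ))⁻¹ * IGσ := by
        rw [integral_finset_sum _ fun i _ => hAint i,
          integral_finset_sum _ fun i _ => hBint i]
        exact congrArg₂ (· + ·) (Finset.sum_congr rfl fun i _ => hAval i)
          (Finset.sum_congr rfl fun i _ => hBval i)
    _ = (n:ℝ) * ((((n:ℝ))⁻¹ * (((d0:ℝ))⁻¹ * ∑ j : Fin d0, x j * x' j)) * IGd)
        + (n:ℝ) * (((n:ℝ))⁻¹ * IGσ) := by
        rw [Finset.sum_const, Finset.sum_const, Finset.card_univ, Fintype.card_fin,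
          nsmul_eq_mul, nsmul_eq_mul]
    _ = IGσ + ((∑ j : Fin d0, x j * x' j) / (d0:ℝ)) * IGd := by
        field_simp
        ring

end OneHiddenLayer
end
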